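/- Let K ≥ 3 be odd, d ≥ 1, N ≥ d(K+1)/2. For each ordered pair (i,j) with i ≠ j (indices mod K), define the d×(N−d) matrix F_{ij} whose k-th d×d block (for (K−1)/2 < k ≤ K−1, placed in order, padded by zeros) equals Id_d if k = i−j mod K and 0 otherwise, and define the (N−d)×d matrix G_{ij} whose k-th d×d block (for 1 ≤ k ≤ (K−1)/2, padded below by zeros) equals Id_d if k = i−j mod K and 0 otherwise. Then the solution set of the linear system V_i^T G_{ij} + F_{ij} U_j = 0 for all i ≠ j, in variables U_j, V_i ∈ ℂ^{(N−d)×d}, is a linear subspace of dimension 2Kd(N−d) − K(K−1)d². -/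
import Mathlib


open Matrix

private lemma sum_single_left {n : ℕ} (u f : Fin n → ℂ) (c₀ : Fin n)
    (h1 : f c₀ = 1) (h0 : ∀ c, c ≠ c₀ → f c = 0) :
    ∑ c, f c * u c = u c₀ := by
  rw [Finset.sum_eq_single c₀]
  · rw [h1, one_mul]
  · intro c _ hc; rw [h0 c hc, zero_mul]
  · intro h; exact absurd (Finset.mem_univ c₀) h

private lemma sum_single_right {n : ℕ} (u f : Fin n → ℂ) (c₀ : Fin n)
    (h1 : f c₀ = 1) (h0 : ∀ c, c ≠ c₀ → f c = 0) :
    ∑ c, u c * f c = u c₀ := by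
  rw [Finset.sum_eq_single c₀]
  · rw [h1, mul_one]
  · intro c _ hc; rw [h0 c hc, mul_zero]
  · intro h; exact absurd (Finset.mem_univ c₀) h

private lemma divmod_block {d k a : ℕ} (hd : 0 < d) (ha : a < d) :
    (k * d + a) / d = k ∧ (k * d + a) % d = a := by
  constructor
  · rw [add_comm, Nat.add_mul_div_right _ _ hd, Nat.div_eq_of_lt ha, zero_add]
  · rw [add_comm, Nat.add_mul_mod_self_right, Nat.mod_eq_of_lt ha]

private lemma block_eq {d : ℕ} (hd : 0 < d) {c k a : ℕ} (ha : a < d) :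
    (c / d = k ∧ c % d = a) ↔ c = k * d + a := by
  constructor
  · rintro ⟨h1, h2⟩; rw [← h1, ← h2, mul_comm]; exact (Nat.div_add_mod c d).symm
  · rintro rfl; exact divmod_block hd ha

private lemma cond_iff {d m n v e k a : ℕ} (hd : 0 < d) (ha : a < d) (hk : k < m)
    (hv : v = e + k) (c : Fin n) :
    ((c : ℕ) / d < m ∧ a = (c : ℕ) % d ∧ v = e + (c : ℕ) / d) ↔ (c : ℕ) = k * d + a := by
  constructor
  · rintro ⟨h1, h2, h3⟩
    have hq : (c : ℕ) / d = k := Nat.add_left_cancel (hv.symm.trans h3).symm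
    exact (block_eq hd ha).mp ⟨hq, h2.symm⟩
  · intro hc
    have h1 : (c : ℕ) / d = k := by rw [hc]; exact (divmod_block hd ha).1
    have h2 : (c : ℕ) % d = a := by rw [hc]; exact (divmod_block hd ha).2
    exact ⟨by rw [h1]; exact hk, h2.symm, by rw [h1]; exact hv⟩

private lemma blt {d m k a : ℕ} (ha : a < d) (hk : k < m) : k * d + a < m * d :=
  lt_of_lt_of_le (Nat.add_lt_add_left ha _)
    (by rw [← Nat.succ_mul]; exact Nat.mul_le_mul_right d hk)

private lemma val_shift {K : ℕ} (hK : 0 < K) (j : Fin K) (s : ℕ) (hs : s < K) (hs0 : 0 < s) :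
    ∃ i : Fin K, i ≠ j ∧ ((((i : ℕ) : ZMod K)) - (((j : ℕ) : ZMod K))).val = s := by
  haveI : NeZero K := ⟨hK.ne'⟩
  refine ⟨⟨((j : ℕ) + s) % K, Nat.mod_lt _ hK⟩, ?_, ?_⟩
  rotate_left
  · have h1 : ((((((j : ℕ) + s) % K : ℕ)) : ZMod K)) = ((j : ℕ) : ZMod K) + (s : ZMod K) := by
      rw [ZMod.natCast_mod, Nat.cast_add]
    show (((((j : ℕ) + s) % K : ℕ) : ZMod K) - ((j : ℕ) : ZMod K)).val = s
    rw [h1, add_sub_cancel_left]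
    exact ZMod.val_cast_of_lt hs
  · intro h
    have h2 : (((j : ℕ) + s) % K : ℕ) = (j : ℕ) := congrArg Fin.val h
    have h3 : ((((j : ℕ) : ZMod K)) - (((j : ℕ) : ZMod K))).val = s := by
      nth_rewrite 1 [← h2]
      have h1 : ((((((j : ℕ) + s) % K : ℕ)) : ZMod K)) = ((j : ℕ) : ZMod K) + (s : ZMod K) := by
        rw [ZMod.natCast_mod, Nat.cast_add]
      rw [h1, add_sub_cancel_left]; exact ZMod.val_cast_of_lt hs
    rw [sub_self, ZMod.val_zero] at h3
    omega

private lemma val_shift' {K : ℕ} (hK : 0 < K) (i : Fin K) (s : ℕ) (hs : s < K) (hs0 : 0 < s) :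
    ∃ j : Fin K, i ≠ j ∧ ((((i : ℕ) : ZMod K)) - (((j : ℕ) : ZMod K))).val = s := by
  haveI : NeZero K := ⟨hK.ne'⟩
  refine ⟨⟨((i : ℕ) + (K - s)) % K, Nat.mod_lt _ hK⟩, ?_, ?_⟩
  rotate_left
  · have h1 : (((((i : ℕ) + (K - s)) % K : ℕ)) : ZMod K) = ((i : ℕ) : ZMod K) - (s : ZMod K) := by
      rw [ZMod.natCast_mod, Nat.cast_add, Nat.cast_sub hs.le, ZMod.natCast_self]; ring
    show (((i : ℕ) : ZMod K) - ((((i : ℕ) + (K - s)) % K : ℕ) : ZMod K)).val = s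
    rw [h1, sub_sub_cancel]
    exact ZMod.val_cast_of_lt hs
  · intro h
    have h2 : (i : ℕ) = (((i : ℕ) + (K - s)) % K : ℕ) := congrArg Fin.val h
    have h1 : (((((i : ℕ) + (K - s)) % K : ℕ)) : ZMod K) = ((i : ℕ) : ZMod K) - (s : ZMod K) := by
      rw [ZMod.natCast_mod, Nat.cast_add, Nat.cast_sub hs.le, ZMod.natCast_self]; ring
    have h3 : (0 : ZMod K).val = s := by
      rw [show (0 : ZMod K) = ((i : ℕ) : ZMod K) - (((i : ℕ) : ZMod K)) by ring]
      nth_rewrite 2 [h2]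
      rw [h1, sub_sub_cancel]; exact ZMod.val_cast_of_lt hs
    rw [ZMod.val_zero] at h3
    omega

/-- Odd-`K` achievability construction.  With `m = (K−1)/2`, for each ordered pair
`(i,j)`, `i ≠ j`, the matrix `F_{ij} ∈ ℂ^{d×(N−d)}` consists of the `d×d` blocks
`A_{ij}(m+1),…,A_{ij}(K−1)` padded by zeros, and `G_{ij} ∈ ℂ^{(N−d)×d}` consists of the
blocks `A_{ij}(1),…,A_{ij}(m)` padded by zeros, where `A_{ij}(k) = Id_d` if
`k ≡ i−j (mod K)` and `0` otherwise.  The solution set of the linear system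
`V_iᵀ G_{ij} + F_{ij} U_j = 0` for all `i ≠ j`, in the variables
`U_j, V_i ∈ ℂ^{(N−d)×d}`, is a linear subspace of dimension `2Kd(N−d) − K(K−1)d²`. -/
theorem stmt6 (K d N : ℕ) (hK : 3 ≤ K) (hKodd : Odd K) (hd : 1 ≤ d)
    (hN : (N : ℚ) ≥ (d : ℚ) * (K + 1) / 2)
    (F : Fin K → Fin K → Matrix (Fin d) (Fin (N - d)) ℂ)
    (G : Fin K → Fin K → Matrix (Fin (N - d)) (Fin d) ℂ)
    (hF : ∀ i j, ∀ (a : Fin d) (c : Fin (N - d)), F i j a c =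
      if (c : ℕ) / d < (K - 1) / 2 ∧ (a : ℕ) = (c : ℕ) % d ∧
          ((((i : ℕ) : ZMod K) - ((j : ℕ) : ZMod K)).val = (K - 1) / 2 + 1 + (c : ℕ) / d)
        then 1 else 0)
    (hG : ∀ i j, ∀ (r : Fin (N - d)) (b : Fin d), G i j r b =
      if (r : ℕ) / d < (K - 1) / 2 ∧ (b : ℕ) = (r : ℕ) % d ∧
          ((((i : ℕ) : ZMod K) - ((j : ℕ) : ZMod K)).val = 1 + (r : ℕ) / d)
        then 1 else 0) :
    ∃ S : Submodule ℂ ((Fin K → Matrix (Fin (N - d)) (Fin d) ℂ) ×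
        (Fin K → Matrix (Fin (N - d)) (Fin d) ℂ)),
      (S : Set ((Fin K → Matrix (Fin (N - d)) (Fin d) ℂ) ×
          (Fin K → Matrix (Fin (N - d)) (Fin d) ℂ))) =
        {p | ∀ i j, i ≠ j → (p.2 i)ᵀ * G i j + F i j * (p.1 j) = 0} ∧
      (Module.finrank ℂ S : ℤ) = 2 * K * d * ((N : ℤ) - d) - K * ((K : ℤ) - 1) * d ^ 2 := by
  
  haveI : NeZero K := ⟨by omega⟩
  have hK0 : 0 < K := by omega
  have hdpos : 0 < d := hd
  set m := (K - 1) / 2 with hm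
  have hm2 : K = 2 * m + 1 := by
    obtain ⟨t, ht⟩ := hKodd; omega
  -- numeric bounds
  have hNd : d * (m + 1) ≤ N := by
    have hK' : (K : ℚ) = 2 * m + 1 := by exact_mod_cast congrArg (Nat.cast : ℕ → ℚ) hm2
    have h1 : ((d * (m + 1) : ℕ) : ℚ) ≤ (N : ℚ) := by
      push_cast
      rw [hK'] at hN
      linarith
    exact_mod_cast h1
  have hdm : d * m + d ≤ N := by nlinarith
  have hle : m * d ≤ N - d := by rw [mul_comm]; omega
  have hdN : d ≤ N := by omega
  -- the solution submodule
  let S : Submodule ℂ ((Fin K → Matrix (Fin (N - d)) (Fin d) ℂ) ×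
      (Fin K → Matrix (Fin (N - d)) (Fin d) ℂ)) :=
    { carrier := {p | ∀ i j, i ≠ j → (p.2 i)ᵀ * G i j + F i j * (p.1 j) = 0}
      add_mem' := by
        intro a b ha hb i j hij
        simp only [Prod.fst_add, Prod.snd_add, Pi.add_apply, transpose_add, Matrix.add_mul,
          Matrix.mul_add]
        rw [add_add_add_comm, ha i j hij, hb i j hij, add_zero]
      zero_mem' := by
        intro i j hij
        simp
      smul_mem' := by
        intro c p hp i j hij
        simp only [Prod.smul_fst, Prod.smul_snd, Pi.smul_apply, transpose_smul, Matrix.smul_mul,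
          Matrix.mul_smul, ← smul_add, hp i j hij, smul_zero] }
  -- the projection map onto the first m*d rows
  let T : ((Fin K → Matrix (Fin (N - d)) (Fin d) ℂ) ×
        (Fin K → Matrix (Fin (N - d)) (Fin d) ℂ)) →ₗ[ℂ]
      ((Fin K → Matrix (Fin (m * d)) (Fin d) ℂ) ×
        (Fin K → Matrix (Fin (m * d)) (Fin d) ℂ)) :=
    { toFun := fun p => (fun j => Matrix.of fun r b => p.1 j (Fin.castLE hle r) b,
        fun i => Matrix.of fun r b => p.2 i (Fin.castLE hle r) b)
      map_add' := fun p q => rfl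
      map_smul' := fun c p => rfl }
  have hSker : S = LinearMap.ker T := by
    ext p
    simp only [LinearMap.mem_ker]
    constructor
    · -- solutions have vanishing first m*d rows
      intro hp
      have key1 : ∀ j (r : Fin (m * d)) (b : Fin d), p.1 j (Fin.castLE hle r) b = 0 := by
        intro j r b
        have hk : (r : ℕ) / d < m := (Nat.div_lt_iff_lt_mul hdpos).mpr r.isLt
        obtain ⟨i, hij, hval⟩ := val_shift hK0 j (m + 1 + (r : ℕ) / d) (by omega)
          (Nat.lt_of_lt_of_le (Nat.succ_pos m) (Nat.le_add_right (m + 1) _))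
        have hE : ((p.2 i)ᵀ * G i j + F i j * p.1 j) ⟨(r : ℕ) % d, Nat.mod_lt _ hdpos⟩ b
            = (0 : Matrix (Fin d) (Fin d) ℂ) ⟨(r : ℕ) % d, Nat.mod_lt _ hdpos⟩ b := by
          rw [hp i j hij]
        simp only [Matrix.add_apply, Matrix.mul_apply, Matrix.transpose_apply,
          Matrix.zero_apply] at hE
        have hzero : ∑ x, p.2 i x ⟨(r : ℕ) % d, Nat.mod_lt _ hdpos⟩ * G i j x b = 0 := by
          apply Finset.sum_eq_zero
          intro c _
          rw [hG i j c b, if_neg, mul_zero]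
          rintro ⟨hq1, _, hq3⟩
          have h4 : 1 + (c : ℕ) / d < 1 + m := Nat.add_lt_add_left hq1 1
          rw [← hq3] at h4
          have h5 : m + 1 ≤ (((i : ℕ) : ZMod K) - ((j : ℕ) : ZMod K)).val := by
            rw [hval]; exact Nat.le_add_right _ _
          omega
        have hone : ∑ c, F i j ⟨(r : ℕ) % d, Nat.mod_lt _ hdpos⟩ c * p.1 j c b
            = p.1 j (Fin.castLE hle r) b := by
          apply sum_single_left
          · rw [hF i j]
            rw [if_pos]
            refine ⟨?_, ?_, ?_⟩
            · show ((r : ℕ)) / d < m; exact hk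
            · rfl
            · show _ = m + 1 + ((r : ℕ)) / d; exact hval
          · intro c hc
            rw [hF i j, if_neg]
            intro hcond
            have h5 := (cond_iff hdpos (Nat.mod_lt _ hdpos) hk hval c).mp hcond
            apply hc
            apply Fin.ext
            rw [h5]
            show (r : ℕ) / d * d + (r : ℕ) % d = (r : ℕ)
            rw [mul_comm]; exact Nat.div_add_mod _ _
        rw [hzero, hone, zero_add] at hE
        exact hE
      have key2 : ∀ i (r : Fin (m * d)) (b : Fin d), p.2 i (Fin.castLE hle r) b = 0 := by
        intro i r b
        have hk : (r : ℕ) / d < m := (Nat.div_lt_iff_lt_mul hdpos).mpr r.isLt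
        obtain ⟨j, hij, hval⟩ := val_shift' hK0 i (1 + (r : ℕ) / d) (by omega)
          (Nat.lt_of_lt_of_le Nat.one_pos (Nat.le_add_right 1 _))
        have hE : ((p.2 i)ᵀ * G i j + F i j * p.1 j) b ⟨(r : ℕ) % d, Nat.mod_lt _ hdpos⟩
            = (0 : Matrix (Fin d) (Fin d) ℂ) b ⟨(r : ℕ) % d, Nat.mod_lt _ hdpos⟩ := by
          rw [hp i j hij]
        simp only [Matrix.add_apply, Matrix.mul_apply, Matrix.transpose_apply,
          Matrix.zero_apply] at hE
        have hzero : ∑ c, F i j b c * p.1 j c ⟨(r : ℕ) % d, Nat.mod_lt _ hdpos⟩ = 0 := by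
          apply Finset.sum_eq_zero
          intro c _
          rw [hF i j, if_neg, zero_mul]
          rintro ⟨_, _, hq3⟩
          have h4 : m + 1 ≤ (((i : ℕ) : ZMod K) - ((j : ℕ) : ZMod K)).val := by
            rw [hq3]; exact Nat.le_add_right _ _
          have h5 : (((i : ℕ) : ZMod K) - ((j : ℕ) : ZMod K)).val < 1 + m := by
            rw [hval]; exact Nat.add_lt_add_left hk 1
          omega
        have hone : ∑ x, p.2 i x b * G i j x ⟨(r : ℕ) % d, Nat.mod_lt _ hdpos⟩
            = p.2 i (Fin.castLE hle r) b := by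
          apply sum_single_right
          · rw [hG i j, if_pos]
            refine ⟨hk, rfl, hval⟩
          · intro c hc
            rw [hG i j, if_neg]
            intro hcond
            have h5 := (cond_iff hdpos (Nat.mod_lt _ hdpos) hk hval c).mp hcond
            apply hc
            apply Fin.ext
            rw [h5]
            show (r : ℕ) / d * d + (r : ℕ) % d = (r : ℕ)
            rw [mul_comm]; exact Nat.div_add_mod _ _
        rw [hzero, hone, add_zero] at hE
        exact hE
      refine Prod.ext ?_ ?_
      · funext j; exact Matrix.ext fun r b => key1 j r b
      · funext i; exact Matrix.ext fun r b => key2 i r b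
    · -- kernel elements are solutions
      intro hp
      have key1 : ∀ j (r : Fin (N - d)) (b : Fin d), (r : ℕ) < m * d → p.1 j r b = 0 := by
        intro j r b hr
        have h1 : p.1 j (Fin.castLE hle (⟨(r : ℕ), hr⟩ : Fin (m * d))) b = 0 :=
          congrFun (congrFun (congrFun (congrArg Prod.fst hp) j)
            (⟨(r : ℕ), hr⟩ : Fin (m * d))) b
        have h2 : Fin.castLE hle (⟨(r : ℕ), hr⟩ : Fin (m * d)) = r := Fin.ext rfl
        rw [h2] at h1
        exact h1
      have key2 : ∀ i (r : Fin (N - d)) (b : Fin d), (r : ℕ) < m * d → p.2 i r b = 0 := by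
        intro i r b hr
        have h1 : p.2 i (Fin.castLE hle (⟨(r : ℕ), hr⟩ : Fin (m * d))) b = 0 :=
          congrFun (congrFun (congrFun (congrArg Prod.snd hp) i)
            (⟨(r : ℕ), hr⟩ : Fin (m * d))) b
        have h2 : Fin.castLE hle (⟨(r : ℕ), hr⟩ : Fin (m * d)) = r := Fin.ext rfl
        rw [h2] at h1
        exact h1
      intro i j hij
      set s := ((((i : ℕ) : ZMod K)) - (((j : ℕ) : ZMod K))).val with hs
      have hsK : s < K := ZMod.val_lt _
      have hs1 : 1 ≤ s := by
        rcases Nat.eq_zero_or_pos s with h0 | h0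
        · exfalso
          have : (((i : ℕ) : ZMod K)) - (((j : ℕ) : ZMod K)) = 0 := (ZMod.val_eq_zero _).mp h0
          have hij2 : (((i : ℕ) : ZMod K)) = (((j : ℕ) : ZMod K)) := by
            rwa [sub_eq_zero] at this
          apply hij
          apply Fin.ext
          have := congrArg ZMod.val hij2
          rwa [ZMod.val_cast_of_lt i.isLt, ZMod.val_cast_of_lt j.isLt] at this
        · exact h0
      ext x y
      simp only [Matrix.add_apply, Matrix.mul_apply, Matrix.transpose_apply, Matrix.zero_apply]
      rcases le_or_gt s m with hsm | hsm
      · -- F part vanishes identically; G part picks a vanishing row of V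
        have hzero : ∑ c, F i j x c * p.1 j c y = 0 := by
          apply Finset.sum_eq_zero
          intro c _
          rw [hF i j, if_neg, zero_mul]
          rintro ⟨_, _, hq3⟩
          have h4 : m + 1 ≤ s := by rw [hs, hq3]; exact Nat.le_add_right _ _
          omega
        have hk : s - 1 < m := by omega
        have hlt : (s - 1) * d + (y : ℕ) < N - d := lt_of_lt_of_le (blt y.isLt hk) hle
        have hone : ∑ c, p.2 i c x * G i j c y = p.2 i ⟨(s - 1) * d + (y : ℕ), hlt⟩ x := by
          apply sum_single_right
          · rw [hG i j, if_pos]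
            refine ⟨?_, ?_, ?_⟩
            · show ((s - 1) * d + (y : ℕ)) / d < m
              rw [(divmod_block hdpos y.isLt).1]; exact hk
            · show (y : ℕ) = ((s - 1) * d + (y : ℕ)) % d
              rw [(divmod_block hdpos y.isLt).2]
            · show s = 1 + ((s - 1) * d + (y : ℕ)) / d
              rw [(divmod_block hdpos y.isLt).1]; omega
          · intro c hc
            rw [hG i j, if_neg]
            intro hcond
            have h5 := (cond_iff hdpos y.isLt hk (by omega : s = 1 + (s - 1)) c).mp hcond
            exact hc (Fin.ext h5)
        rw [hzero, hone, add_zero]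
        exact key2 i _ x (blt y.isLt hk)
      · -- G part vanishes identically; F part picks a vanishing row of U
        have hzero : ∑ c, p.2 i c x * G i j c y = 0 := by
          apply Finset.sum_eq_zero
          intro c _
          rw [hG i j, if_neg, mul_zero]
          rintro ⟨hq1, _, hq3⟩
          have h4 : 1 + (c : ℕ) / d < 1 + m := Nat.add_lt_add_left hq1 1
          rw [← hq3, ← hs] at h4
          omega
        have hk : s - m - 1 < m := by omega
        have hlt : (s - m - 1) * d + (x : ℕ) < N - d := lt_of_lt_of_le (blt x.isLt hk) hle
        have hone : ∑ c, F i j x c * p.1 j c y = p.1 j ⟨(s - m - 1) * d + (x : ℕ), hlt⟩ y := by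
          apply sum_single_left
          · rw [hF i j, if_pos]
            refine ⟨?_, ?_, ?_⟩
            · show ((s - m - 1) * d + (x : ℕ)) / d < m
              rw [(divmod_block hdpos x.isLt).1]; exact hk
            · show (x : ℕ) = ((s - m - 1) * d + (x : ℕ)) % d
              rw [(divmod_block hdpos x.isLt).2]
            · show s = m + 1 + ((s - m - 1) * d + (x : ℕ)) / d
              rw [(divmod_block hdpos x.isLt).1]; omega
          · intro c hc
            rw [hF i j, if_neg]
            intro hcond
            have h5 := (cond_iff hdpos x.isLt hk (by omega : s = (m + 1) + (s - m - 1)) c).mp hcond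
            exact hc (Fin.ext h5)
        rw [hzero, hone, zero_add]
        exact key1 j _ y (blt x.isLt hk)
  refine ⟨S, rfl, ?_⟩
  -- rank computation
  have hsurj : Function.Surjective T := by
    intro q
    refine ⟨(fun j => Matrix.of fun r b => if h : (r : ℕ) < m * d then q.1 j ⟨(r : ℕ), h⟩ b else 0,
      fun i => Matrix.of fun r b => if h : (r : ℕ) < m * d then q.2 i ⟨(r : ℕ), h⟩ b else 0), ?_⟩
    refine Prod.ext ?_ ?_
    · funext x
      apply Matrix.ext
      intro r b
      show (if h : ((Fin.castLE hle r : Fin (N - d)) : ℕ) < m * d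
        then q.1 x ⟨((Fin.castLE hle r : Fin (N - d)) : ℕ), h⟩ b else 0) = q.1 x r b
      rw [dif_pos (show ((Fin.castLE hle r : Fin (N - d)) : ℕ) < m * d from r.isLt)]
      exact congrArg (fun z => q.1 x z b) (Fin.ext rfl)
    · funext x
      apply Matrix.ext
      intro r b
      show (if h : ((Fin.castLE hle r : Fin (N - d)) : ℕ) < m * d
        then q.2 x ⟨((Fin.castLE hle r : Fin (N - d)) : ℕ), h⟩ b else 0) = q.2 x r b
      rw [dif_pos (show ((Fin.castLE hle r : Fin (N - d)) : ℕ) < m * d from r.isLt)]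
      exact congrArg (fun z => q.2 x z b) (Fin.ext rfl)
  have hrank := LinearMap.finrank_range_add_finrank_ker T
  rw [LinearMap.range_eq_top.mpr hsurj, finrank_top] at hrank
  have hdom : Module.finrank ℂ ((Fin K → Matrix (Fin (N - d)) (Fin d) ℂ) ×
      (Fin K → Matrix (Fin (N - d)) (Fin d) ℂ)) = K * ((N - d) * d) + K * ((N - d) * d) := by
    rw [Module.finrank_prod, Module.finrank_pi_fintype]
    simp [Module.finrank_matrix, mul_comm, mul_assoc]
  have hcod : Module.finrank ℂ ((Fin K → Matrix (Fin (m * d)) (Fin d) ℂ) ×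
      (Fin K → Matrix (Fin (m * d)) (Fin d) ℂ)) = K * ((m * d) * d) + K * ((m * d) * d) := by
    rw [Module.finrank_prod, Module.finrank_pi_fintype]
    simp [Module.finrank_matrix, mul_comm, mul_assoc]
  rw [hSker]
  rw [hdom, hcod] at hrank
  have hcast : ((N - d : ℕ) : ℤ) = (N : ℤ) - (d : ℤ) := by
    rw [Nat.cast_sub hdN]
  have hK' : (K : ℤ) = 2 * (m : ℤ) + 1 := by exact_mod_cast congrArg (Nat.cast : ℕ → ℤ) hm2
  have hval : (Module.finrank ℂ (LinearMap.ker T) : ℤ)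
      = (K * ((N - d) * d) + K * ((N - d) * d) : ℕ) - (K * ((m * d) * d) + K * ((m * d) * d) : ℕ) := by
    have h1 : (K * ((m * d) * d) + K * ((m * d) * d) : ℤ) + (Module.finrank ℂ (LinearMap.ker T) : ℤ)
        = (K * ((N - d) * d) + K * ((N - d) * d) : ℕ) := by exact_mod_cast congrArg (Nat.cast : ℕ → ℤ) hrank
    push_cast at h1 ⊢
    linarith
  rw [hval]
  push_cast [hcast]
  linear_combination ((K : ℤ) * (d : ℤ) ^ 2) * hK'
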